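/- Let S be an operator system with C*-cover D. If S is hyperrigid in D and φ : D → B(H) is a ucp map whose restriction to S agrees with the restriction of a unital *-representation π : D → B(H), then φ = π. Consequently, if U(S) is hyperrigid in M₂(D), then S is hyperrigid in D. -/

import Mathlib

set_option synthInstance.maxHeartbeats 2000000
set_option maxHeartbeats 2000000


open Matrix

def MatPos {R : Type*} [Ring R] [StarRing R] {ι : Type*} [Fintype ι]
    (M : Matrix ι ι R) : Prop :=
  ∃ B : Matrix ι ι R, M = star B * B

def IsUCPMap {A B : Type*} [Ring A] [StarRing A] [Module ℂ A]
    [Ring B] [StarRing B] [Module ℂ B] (φ : A →ₗ[ℂ] B) : Prop :=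
  φ 1 = 1 ∧
  ∀ (n : ℕ) (M : Matrix (Fin n) (Fin n) A), MatPos M → MatPos (M.map ⇑φ)

/-- `X ⊆ D` is hyperrigid in `D`: for every unital *-representation `π` of `D` on a
Hilbert space, the only ucp map agreeing with `π` on `X` is `π` itself. -/
def HyperrigidUCP.{v} {D : Type*} [Ring D] [StarRing D] [Algebra ℂ D]
    (X : Set D) : Prop :=
  ∀ (H : Type v) [NormedAddCommGroup H] [InnerProductSpace ℂ H] [CompleteSpace H]
    (π : D →⋆ₐ[ℂ] (H →L[ℂ] H)) (ψ : D →ₗ[ℂ] (H →L[ℂ] H)),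
    IsUCPMap ψ → (∀ x ∈ X, ψ x = π x) → ∀ d : D, ψ d = π d


noncomputable section Amp

theorem MatPos.map_hom {R R' : Type*} [Ring R] [StarRing R] [Ring R'] [StarRing R']
    {ι κ : Type*} [Fintype ι] [Fintype κ] [DecidableEq ι] [DecidableEq κ]
    (g : Matrix ι ι R →+* Matrix κ κ R') (hg : ∀ M, g (star M) = star (g M))
    {M : Matrix ι ι R} (h : MatPos M) : MatPos (g M) := by
  obtain ⟨B, rfl⟩ := h
  exact ⟨g B, by rw [_root_.map_mul, hg]⟩

variable {H : Type*} [NormedAddCommGroup H] [InnerProductSpace ℂ H] [CompleteSpace H]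

local notation "K2" => PiLp 2 (fun _ : Fin 2 => H)

noncomputable instance : CompleteSpace (PiLp 2 (fun _ : Fin 2 => H)) := inferInstance

/-- Amplification of a 2×2 matrix of operators to an operator on `H ⊕ H`. -/
def amp (M : Matrix (Fin 2) (Fin 2) (H →L[ℂ] H)) : K2 →L[ℂ] K2 :=
  ((PiLp.continuousLinearEquiv 2 ℂ (fun _ : Fin 2 => H)).symm : (Fin 2 → H) →L[ℂ] K2) ∘L
    (ContinuousLinearMap.pi fun i => ∑ j, (M i j).comp (ContinuousLinearMap.proj j)) ∘L
    ((PiLp.continuousLinearEquiv 2 ℂ (fun _ : Fin 2 => H)) : K2 →L[ℂ] (Fin 2 → H))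

theorem amp_apply (M : Matrix (Fin 2) (Fin 2) (H →L[ℂ] H)) (x : K2) (i : Fin 2) :
    amp M x i = ∑ j, M i j (x j) := by
  simp [amp, ContinuousLinearMap.pi_apply, ContinuousLinearMap.sum_apply]

theorem amp_ext {A B : K2 →L[ℂ] K2} (h : ∀ x : K2, ∀ i, A x i = B x i) : A = B :=
  ContinuousLinearMap.ext fun x => PiLp.ext (h x)

/-- `amp` as a star algebra homomorphism. -/
def ampHom : Matrix (Fin 2) (Fin 2) (H →L[ℂ] H) →⋆ₐ[ℂ] (K2 →L[ℂ] K2) where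
  toFun := amp
  map_one' := by
    refine amp_ext fun x i => ?_
    fin_cases i <;> simp [amp_apply, Matrix.one_apply, Fin.sum_univ_two]
  map_mul' M N := by
    refine amp_ext fun x i => ?_
    rw [ContinuousLinearMap.mul_apply, amp_apply, amp_apply]
    have h : ∀ k, (amp N x) k = ∑ j, N k j (x j) := fun k => amp_apply N x k
    simp only [h, Matrix.mul_apply, ContinuousLinearMap.sum_apply,
      ContinuousLinearMap.mul_apply, map_sum]
    exact Finset.sum_comm
  map_zero' := by
    refine amp_ext fun x i => ?_
    simp [amp_apply]
  map_add' M N := by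
    refine amp_ext fun x i => ?_
    simp [amp_apply, Finset.sum_add_distrib]
  commutes' c := by
    refine amp_ext fun x i => ?_
    fin_cases i <;>
      simp [amp_apply, Algebra.algebraMap_eq_smul_one, Matrix.smul_apply, Matrix.one_apply,
        Fin.sum_univ_two]
  map_star' M := by
    show amp (star M) = star (amp M)
    rw [ContinuousLinearMap.star_eq_adjoint, ContinuousLinearMap.eq_adjoint_iff]
    intro x y
    simp only [PiLp.inner_apply, amp_apply, sum_inner, inner_sum]
    rw [Finset.sum_comm]
    refine Finset.sum_congr rfl fun j _ => Finset.sum_congr rfl fun i _ => ?_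
    rw [Matrix.star_apply, ContinuousLinearMap.star_eq_adjoint,
      ContinuousLinearMap.adjoint_inner_left]

end Amp

section Main

variable {D : Type*} [NormedRing D] [StarRing D] [CStarRing D] [NormedAlgebra ℂ D]
    [StarModule ℂ D] [CompleteSpace D]

theorem hyperrigid_aux (S : Submodule ℂ D)
    (hU : HyperrigidUCP.{v}
        {M : Matrix (Fin 2) (Fin 2) D |
          ∃ (l : ℂ) (x : D), x ∈ S ∧ M = !![l • 1, x; 0, l • 1]}) :
    HyperrigidUCP.{v} (S : Set D) := by
  intro H _ _ _ π ψ hψ hag d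
  classical
  -- amplified maps
  let πM : Matrix (Fin 2) (Fin 2) D →⋆ₐ[ℂ] Matrix (Fin 2) (Fin 2) (H →L[ℂ] H) :=
    { π.toAlgHom.mapMatrix with
      map_star' := fun M => by
        ext i j
        simp [Matrix.star_apply, Matrix.map_apply, map_star] }
  let Pi2 : Matrix (Fin 2) (Fin 2) D →⋆ₐ[ℂ] (PiLp 2 (fun _ : Fin 2 => H) →L[ℂ] _) :=
    StarAlgHom.comp ampHom πM
  let Psi2 : Matrix (Fin 2) (Fin 2) D →ₗ[ℂ] (PiLp 2 (fun _ : Fin 2 => H) →L[ℂ] _) :=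
    (ampHom.toAlgHom.toLinearMap).comp (ψ.mapMatrix)
  have hPsiapp : ∀ M : Matrix (Fin 2) (Fin 2) D, Psi2 M = ampHom (H := H) (M.map ψ) := fun M => rfl
  have hPiapp : ∀ M : Matrix (Fin 2) (Fin 2) D, Pi2 M = ampHom (H := H) (M.map π) := fun M => rfl
  have hPsiucp : IsUCPMap Psi2 := by
    constructor
    · rw [hPsiapp]
      rw [show (1 : Matrix (Fin 2) (Fin 2) D).map ψ = 1 from
        Matrix.map_one _ (map_zero ψ) hψ.1]
      exact map_one ampHom
    · intro n M hM
      -- transfer to a (n*2) × (n*2) matrix over D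
      let e₁ := Matrix.compRingEquiv (Fin n) (Fin 2) D
      let e₂ := (Matrix.reindexAlgEquiv ℂ D (finProdFinEquiv (m := n) (n := 2))).toRingEquiv
      have h₁ : MatPos (e₂ (e₁ M)) :=
        MatPos.map_hom (e₂.toRingHom.comp e₁.toRingHom) (fun N => rfl) hM
      have h₂ := hψ.2 (n * 2) _ h₁
      -- transfer back
      have h₃ : MatPos (M.map (fun A => A.map ψ)) := by
        have := MatPos.map_hom
          ((Matrix.compRingEquiv (Fin n) (Fin 2) (H →L[ℂ] H)).symm.toRingHom.comp
            (Matrix.reindexAlgEquiv ℂ (H →L[ℂ] H)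
              (finProdFinEquiv (m := n) (n := 2))).symm.toRingHom)
          (fun N => rfl) h₂
        convert this using 1
        ext i j
        simp [e₁, e₂, Matrix.reindex_apply]
      have h₄ := MatPos.map_hom ((ampHom (H := H)).toAlgHom.toRingHom.mapMatrix)
        (fun N => by
          refine Matrix.ext fun i j => ?_
          simp only [RingHom.mapMatrix_apply, Matrix.star_apply, Matrix.map_apply]
          exact map_star (ampHom (H := H)) _) h₃
      convert h₄ using 1
      rfl
  have hagU : ∀ M ∈ {M : Matrix (Fin 2) (Fin 2) D |
      ∃ (l : ℂ) (x : D), x ∈ S ∧ M = !![l • 1, x; 0, l • 1]}, Psi2 M = Pi2 M := by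
    rintro M ⟨l, x, hx, rfl⟩
    rw [hPsiapp, hPiapp]
    congr 1
    refine Matrix.ext fun i j => ?_
    fin_cases i <;> fin_cases j <;>
      simp [Matrix.map_apply, _root_.map_smul, hψ.1, hag x hx, map_zero]
  have key := hU _ Pi2 Psi2 hPsiucp hagU (Matrix.single 0 0 d)
  rw [hPsiapp, hPiapp] at key
  have hAmp : ∀ M : Matrix (Fin 2) (Fin 2) (H →L[ℂ] H),
      ampHom (H := H) M = amp M := fun _ => rfl
  rw [hAmp, hAmp] at key
  ext v
  set w : PiLp 2 (fun _ : Fin 2 => H) :=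
    (WithLp.equiv 2 (∀ _ : Fin 2, H)).symm (fun j => if j = 0 then v else 0) with hw
  have hv : amp ((Matrix.single 0 0 d).map ψ) w 0
      = amp ((Matrix.single 0 0 d).map π) w 0 := by rw [key]
  have hw0 : w 0 = v := rfl
  have hw1 : w 1 = 0 := rfl
  simpa [amp_apply, Matrix.map_apply, Fin.sum_univ_two, hw0, hw1,
    Matrix.single_apply_same] using hv

end Main


/-- **Hyperrigidity passes from `U(S)` in `M₂(D)` to `S` in `D`.**
If `S` is hyperrigid in `D` then every ucp map agreeing on `S` with a *-representation
equals it; and if `U(S)` is hyperrigid in `M₂(D)` then `S` is hyperrigid in `D`. -/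
theorem hyperrigid_USet_to_S.{v}
    {D : Type*} [NormedRing D] [StarRing D] [CStarRing D] [NormedAlgebra ℂ D]
    [StarModule ℂ D] [CompleteSpace D]
    (S : Submodule ℂ D) (h1 : (1 : D) ∈ S) (hstar : ∀ x ∈ S, star x ∈ S)
    (hgen : closure ((StarAlgebra.adjoin ℂ (S : Set D) : StarSubalgebra ℂ D) : Set D)
      = Set.univ) :
    (HyperrigidUCP.{v} (S : Set D) →
      ∀ (H : Type v) [NormedAddCommGroup H] [InnerProductSpace ℂ H] [CompleteSpace H]
        (π : D →⋆ₐ[ℂ] (H →L[ℂ] H)) (φ : D →ₗ[ℂ] (H →L[ℂ] H)),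
        IsUCPMap φ → (∀ x ∈ S, φ x = π x) → ∀ d : D, φ d = π d) ∧
    (HyperrigidUCP.{v}
        {M : Matrix (Fin 2) (Fin 2) D |
          ∃ (l : ℂ) (x : D), x ∈ S ∧ M = !![l • 1, x; 0, l • 1]} →
      HyperrigidUCP.{v} (S : Set D)) := by
  exact ⟨fun h => h, fun hU => hyperrigid_aux S hU⟩
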